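/- arXiv:gr-qc/0310070 — 3 statements merged into one kernel-verified Lean document; each statement's English description precedes it below -/
import Mathlib

section
/- Fix real constants a ≠ 0 and k ∉ {0, -1}, and set β = 1 + k + k². Define functions α₁(τ) = b·e^{2aβτ}, α₂(τ) = k·α₁(τ), α₃(τ) = -(1+k)·α₁(τ), and constants φ₁ = -√2·k(k+1)·a, φ₂ = -√2·a(k+1), φ₃ = √2·k·a. Then the Bianchi identity equations α₁' = (1/√2)(φ₃(α₂ - α₁) - φ₂(2α₁ + α₂)) and α₂' = (1/√2)(φ₃(α₁ - α₂) - φ₁(α₁ + 2α₂)) hold for all τ. -/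
theorem stmt_2 (a k b : ℝ) (ha : a ≠ 0) (hk0 : k ≠ 0) (hk1 : k ≠ -1)
    (β : ℝ) (hβ : β = 1 + k + k^2)
    (α₁ α₂ α₃ : ℝ → ℝ)
    (hα₁ : ∀ τ, α₁ τ = b * Real.exp (2 * a * β * τ))
    (hα₂ : ∀ τ, α₂ τ = k * α₁ τ)
    (hα₃ : ∀ τ, α₃ τ = -(1 + k) * α₁ τ)
    (φ₁ φ₂ φ₃ : ℝ)
    (hφ₁ : φ₁ = -Real.sqrt 2 * (k * (k + 1)) * a)
    (hφ₂ : φ₂ = -Real.sqrt 2 * a * (k + 1))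
    (hφ₃ : φ₃ = Real.sqrt 2 * k * a) :
    (∀ τ, HasDerivAt α₁
      ((1 / Real.sqrt 2) * (φ₃ * (α₂ τ - α₁ τ) - φ₂ * (2 * α₁ τ + α₂ τ))) τ) ∧
    (∀ τ, HasDerivAt α₂
      ((1 / Real.sqrt 2) * (φ₃ * (α₁ τ - α₂ τ) - φ₁ * (α₁ τ + 2 * α₂ τ))) τ) := by
  have hs : Real.sqrt 2 ≠ 0 := by positivity
  have hd1 : ∀ τ : ℝ, HasDerivAt α₁ (2 * a * β * α₁ τ) τ := by
    intro τ
    have : HasDerivAt (fun τ => b * Real.exp (2 * a * β * τ))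
        (b * (Real.exp (2 * a * β * τ) * (2 * a * β))) τ := by
      simpa using (((hasDerivAt_id τ).const_mul (2 * a * β)).exp).const_mul b
    have heq : α₁ = fun τ => b * Real.exp (2 * a * β * τ) := funext hα₁
    rw [heq]
    simp only []
    convert this using 1; ring
  constructor
  · intro τ
    have := hd1 τ
    convert this using 1
    rw [hα₂ τ, hφ₂, hφ₃, hβ]
    field_simp
    ring
  · intro τ
    have heq2 : α₂ = fun τ => k * α₁ τ := funext hα₂
    have : HasDerivAt α₂ (k * (2 * a * β * α₁ τ)) τ := by
      rw [heq2]; exact (hd1 τ).const_mul k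
    convert this using 1
    rw [hα₂ τ, hφ₁, hφ₃, hβ]
    field_simp
    ring
end

section
/- With the constants of the class I₁₃ solution — a ≠ 0, k ∉ {0,-1,1,-2,-1/2}, β = 1+k+k², φ₁ = -√2 k(k+1)a, φ₂ = -√2 a(k+1), φ₃ = √2 k a, α₁(τ) = b e^{2aβτ}, α₂ = kα₁, α₃ = -(1+k)α₁, and (dτ)² = b e^{2aβτ}/(a² k(k+1)) — the three scalar equations ((φⱼ + φₖ)' - √2 φⱼφₖ)·(dτ)² = 2√2 αᵢ hold for every cyclic permutation (i,j,k) of (1,2,3). -/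
/-! The φᵢ are constants, so the derivative terms vanish. Writing αᵢ = cᵢ α₁ with
c = (1, k, -(1 + k)), each equation reduces to the polynomial identity
-φⱼφₖ = 2 cᵢ a² k (k + 1), after which the common factor b e^{2aβτ} of D and α₁ cancels. -/

theorem deriv_const_add_sub_mul_div_eq {p q c N E : ℝ} (hN : N ≠ 0)
    (hpq : -(p * q) = 2 * c * N) (τ : ℝ) :
    (deriv (fun _ : ℝ => p + q) τ - Real.sqrt 2 * (p * q)) * (E / N)
      = 2 * Real.sqrt 2 * (c * E) := by
  rw [deriv_const]
  field_simp
  linear_combination Real.sqrt 2 * E * hpq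

theorem stmt_3_general (a k b : ℝ) (ha : a ≠ 0)
    (hk0 : k ≠ 0) (hkm1 : k ≠ -1)
    (β : ℝ)
    (φ₁ φ₂ φ₃ : ℝ)
    (hφ₁ : φ₁ = -Real.sqrt 2 * (k * (k + 1)) * a)
    (hφ₂ : φ₂ = -Real.sqrt 2 * a * (k + 1))
    (hφ₃ : φ₃ = Real.sqrt 2 * k * a)
    (α₁ α₂ α₃ D : ℝ → ℝ)
    (hα₁ : ∀ τ, α₁ τ = b * Real.exp (2 * a * β * τ))
    (hα₂ : ∀ τ, α₂ τ = k * α₁ τ)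
    (hα₃ : ∀ τ, α₃ τ = -(1 + k) * α₁ τ)
    (hD : ∀ τ, D τ = b * Real.exp (2 * a * β * τ) / (a^2 * (k * (k + 1)))) :
    ∀ τ : ℝ,
      (deriv (fun _ : ℝ => φ₂ + φ₃) τ - Real.sqrt 2 * (φ₂ * φ₃)) * D τ
          = 2 * Real.sqrt 2 * α₁ τ ∧
      (deriv (fun _ : ℝ => φ₃ + φ₁) τ - Real.sqrt 2 * (φ₃ * φ₁)) * D τ
          = 2 * Real.sqrt 2 * α₂ τ ∧
      (deriv (fun _ : ℝ => φ₁ + φ₂) τ - Real.sqrt 2 * (φ₁ * φ₂)) * D τ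
          = 2 * Real.sqrt 2 * α₃ τ := by
  intro τ
  have hs : Real.sqrt 2 * Real.sqrt 2 = 2 := Real.mul_self_sqrt zero_le_two
  have hN : a ^ 2 * (k * (k + 1)) ≠ 0 := by
    have : k + 1 ≠ 0 := fun h => hkm1 (eq_neg_of_add_eq_zero_left h)
    positivity
  rw [hD, hα₂, hα₃, hα₁]
  refine ⟨?_, ?_, ?_⟩
  · simpa only [one_mul] using deriv_const_add_sub_mul_div_eq (c := 1) hN
      (by rw [hφ₂, hφ₃]; linear_combination a ^ 2 * k * (k + 1) * hs) τ
  · exact deriv_const_add_sub_mul_div_eq hN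
      (by rw [hφ₃, hφ₁]; linear_combination a ^ 2 * k ^ 2 * (k + 1) * hs) τ
  · exact deriv_const_add_sub_mul_div_eq hN
      (by rw [hφ₁, hφ₂]; linear_combination -(a ^ 2 * k * (k + 1) ^ 2) * hs) τ

theorem stmt_3 (a k b : ℝ) (ha : a ≠ 0) (hb : b ≠ 0)
    (hk0 : k ≠ 0) (hkm1 : k ≠ -1) (hk1 : k ≠ 1) (hkm2 : k ≠ -2) (hkh : k ≠ -(1/2))
    (β : ℝ) (hβ : β = 1 + k + k^2)
    (φ₁ φ₂ φ₃ : ℝ)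
    (hφ₁ : φ₁ = -Real.sqrt 2 * (k * (k + 1)) * a)
    (hφ₂ : φ₂ = -Real.sqrt 2 * a * (k + 1))
    (hφ₃ : φ₃ = Real.sqrt 2 * k * a)
    (α₁ α₂ α₃ D : ℝ → ℝ)
    (hα₁ : ∀ τ, α₁ τ = b * Real.exp (2 * a * β * τ))
    (hα₂ : ∀ τ, α₂ τ = k * α₁ τ)
    (hα₃ : ∀ τ, α₃ τ = -(1 + k) * α₁ τ)
    (hD : ∀ τ, D τ = b * Real.exp (2 * a * β * τ) / (a^2 * (k * (k + 1)))) :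
    ∀ τ : ℝ,
      (deriv (fun _ : ℝ => φ₂ + φ₃) τ - Real.sqrt 2 * (φ₂ * φ₃)) * D τ
          = 2 * Real.sqrt 2 * α₁ τ ∧
      (deriv (fun _ : ℝ => φ₃ + φ₁) τ - Real.sqrt 2 * (φ₃ * φ₁)) * D τ
          = 2 * Real.sqrt 2 * α₂ τ ∧
      (deriv (fun _ : ℝ => φ₁ + φ₂) τ - Real.sqrt 2 * (φ₁ * φ₂)) * D τ
          = 2 * Real.sqrt 2 * α₃ τ :=
  stmt_3_general a k b ha hk0 hkm1 β φ₁ φ₂ φ₃ hφ₁ hφ₂ hφ₃ α₁ α₂ α₃ D hα₁ hα₂ hα₃ hD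
end

section
/- For real a ≠ 0 and b with b² real, the function f(τ) = -a·(b² + e^{2√2 τ})/(b² - e^{2√2 τ}) is real-valued for all real τ with b² ≠ e^{2√2τ}, and if instead a or b² were not real, f could not be real-valued on a nonempty open interval unless a and b² are both real. -/
lemma quad_key (a c : ℂ) (x : ℝ) (hx : c ≠ (x : ℂ))
    (h : (a * (c + (x : ℂ)) / (c - (x : ℂ))).im = 0) :
    a.im * (c.re ^ 2 + c.im ^ 2) - 2 * a.re * c.im * x - a.im * x ^ 2 = 0 := by
  have hd : (c - (x : ℂ)) ≠ 0 := sub_ne_zero.mpr hx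
  have hns : Complex.normSq (c - (x : ℂ)) ≠ 0 := by
    simpa [Complex.normSq_eq_zero] using hd
  rw [Complex.div_im] at h
  rw [div_sub_div_same, div_eq_zero_iff] at h
  rcases h with h | h
  · simp only [Complex.mul_im, Complex.mul_re, Complex.add_re, Complex.add_im,
      Complex.sub_re, Complex.sub_im, Complex.ofReal_re, Complex.ofReal_im] at h
    nlinarith [h]
  · exact absurd h hns

theorem stmt_8 (a c : ℂ) (s t : ℝ) (hst : s < t)
    (hne : ∀ τ ∈ Set.Ioo s t, c ≠ Complex.exp (2 * Real.sqrt 2 * τ))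
    (hreal : ∀ τ ∈ Set.Ioo s t,
      (a * (c + Complex.exp (2 * Real.sqrt 2 * τ)) /
        (c - Complex.exp (2 * Real.sqrt 2 * τ))).im = 0) :
    a = 0 ∨ (a.im = 0 ∧ c.im = 0) := by
  by_cases ha : a = 0
  · exact Or.inl ha
  right
  -- three points in the interval
  set τ₁ := s + (t - s) / 4 with hτ1
  set τ₂ := s + (t - s) / 2 with hτ2
  set τ₃ := s + 3 * (t - s) / 4 with hτ3
  have hm1 : τ₁ ∈ Set.Ioo s t := by constructor <;> [skip; skip] <;> simp [hτ1] <;> linarith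
  have hm2 : τ₂ ∈ Set.Ioo s t := by constructor <;> simp [hτ2] <;> linarith
  have hm3 : τ₃ ∈ Set.Ioo s t := by constructor <;> simp [hτ3] <;> linarith
  have hs2 : (0:ℝ) < 2 * Real.sqrt 2 := by positivity
  -- the corresponding real exponentials
  set x₁ := Real.exp (2 * Real.sqrt 2 * τ₁) with hx1
  set x₂ := Real.exp (2 * Real.sqrt 2 * τ₂) with hx2
  set x₃ := Real.exp (2 * Real.sqrt 2 * τ₃) with hx3
  have hτ12 : τ₁ < τ₂ := by simp [hτ1, hτ2]; linarith
  have hτ23 : τ₂ < τ₃ := by simp [hτ2, hτ3]; linarith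
  have h12 : x₁ < x₂ := Real.exp_lt_exp.mpr (by nlinarith)
  have h23 : x₂ < x₃ := Real.exp_lt_exp.mpr (by nlinarith)
  have key : ∀ τ ∈ Set.Ioo s t,
      a.im * (c.re ^ 2 + c.im ^ 2) - 2 * a.re * c.im * Real.exp (2 * Real.sqrt 2 * τ)
        - a.im * (Real.exp (2 * Real.sqrt 2 * τ)) ^ 2 = 0 := by
    intro τ hτ
    have hcast : Complex.exp (2 * Real.sqrt 2 * τ) = ((Real.exp (2 * Real.sqrt 2 * τ) : ℝ) : ℂ) := by
      rw [Complex.ofReal_exp]; push_cast; ring_nf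
    have h1 := hreal τ hτ
    have h2 := hne τ hτ
    rw [hcast] at h1 h2
    exact quad_key a c _ h2 h1
  have e1 := key τ₁ hm1
  have e2 := key τ₂ hm2
  have e3 := key τ₃ hm3
  rw [← hx1] at e1; rw [← hx2] at e2; rw [← hx3] at e3
  -- deduce coefficients vanish
  have d1 : (-2 * a.re * c.im - a.im * (x₁ + x₂)) * (x₁ - x₂) = 0 := by
    linear_combination e1 - e2
  have d2 : (-2 * a.re * c.im - a.im * (x₂ + x₃)) * (x₂ - x₃) = 0 := by
    linear_combination e2 - e3
  have hne12 : x₁ - x₂ ≠ 0 := by linarith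
  have hne23 : x₂ - x₃ ≠ 0 := by linarith
  have d1' : -2 * a.re * c.im - a.im * (x₁ + x₂) = 0 :=
    (mul_eq_zero.mp d1).resolve_right hne12
  have d2' : -2 * a.re * c.im - a.im * (x₂ + x₃) = 0 :=
    (mul_eq_zero.mp d2).resolve_right hne23
  have dC : a.im * (x₁ - x₃) = 0 := by linear_combination d2' - d1'
  have hne13 : x₁ - x₃ ≠ 0 := by linarith
  have haim : a.im = 0 := (mul_eq_zero.mp dC).resolve_right hne13
  refine ⟨haim, ?_⟩
  have hB : a.re * c.im = 0 := by
    have := d1'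
    rw [haim] at this
    linarith
  have hare : a.re ≠ 0 := by
    intro h0
    exact ha (Complex.ext h0 haim)
  exact (mul_eq_zero.mp hB).resolve_left hare
end
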